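/- Let c be a squarefree positive integer, K = ℚ(√−c) with ring of integers O_K, let q be an odd prime with q ∤ c, and let 𝔮 be a nonzero prime ideal of O_K lying above q. Let p be a prime and let δ ∈ O_K, with complex conjugate δ̄, satisfy δᵖ ≡ δ̄ᵖ (mod 𝔮) and δ ≢ δ̄ (mod 𝔮). Then p divides q − (−c/q), where (−c/q) is the Legendre symbol; that is, p ∣ (q − 1) if −c is a quadratic residue modulo q, and p ∣ (q + 1) if −c is a quadratic non-residue modulo q. -/

import Mathlib

open Polynomial IntermediateField

noncomputable def sqrtneg (c : ℕ) : ℂ := Complex.I * Real.sqrt c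

/-- The field `K = ℚ(√-c)`, realised as the subfield of `ℂ` generated by `i·√c`. -/
noncomputable def Kf (c : ℕ) : IntermediateField ℚ ℂ := ℚ⟮sqrtneg c⟯

section helpers
lemma sqrtneg_sq (c : ℕ) : (sqrtneg c) ^ 2 = -(c : ℂ) := by
  unfold sqrtneg
  have h : ((Real.sqrt c : ℝ) : ℂ) ^ 2 = (c : ℂ) := by
    rw [← Complex.ofReal_pow, Real.sq_sqrt (by positivity)]
    norm_num
  rw [mul_pow, Complex.I_sq, h]; ring

lemma sqrtneg_integral (c : ℕ) : IsIntegral ℚ (sqrtneg c) := by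
  refine ⟨X ^ 2 + C (c : ℚ), monic_X_pow_add_C _ (by norm_num), ?_⟩
  simp [sqrtneg_sq c, eval₂, Polynomial.eval₂_eq_eval_map]

lemma Kf_rep (c : ℕ) (z : ℂ) (hz : z ∈ Kf c) :
    ∃ r₀ r₁ : ℚ, z = (r₀ : ℂ) + (r₁ : ℂ) * sqrtneg c := by
  have hint := sqrtneg_integral c
  have hts : (Kf c).toSubalgebra = Algebra.adjoin ℚ {sqrtneg c} :=
    IntermediateField.adjoin_simple_toSubalgebra_of_isAlgebraic hint.isAlgebraic
  have hz' : z ∈ Algebra.adjoin ℚ {sqrtneg c} := by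
    rw [← hts]; exact hz
  rw [Algebra.adjoin_singleton_eq_range_aeval] at hz'
  obtain ⟨f, hf⟩ := hz'
  set g : ℚ[X] := X ^ 2 + C (c : ℚ) with hg
  have hgm : g.Monic := monic_X_pow_add_C _ (by norm_num)
  have hge : aeval (sqrtneg c) g = 0 := by
    simp [hg, map_add, map_pow, sqrtneg_sq c]
  have hdeg : (f %ₘ g).degree ≤ 1 := by
    have := degree_modByMonic_lt f hgm
    have hdg : g.degree = 2 := by
      rw [hg]; compute_degree!
    rw [hdg] at this
    exact Order.le_of_lt_succ (by exact_mod_cast this)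
  have hrep : f %ₘ g = C ((f %ₘ g).coeff 1) * X + C ((f %ₘ g).coeff 0) :=
    eq_X_add_C_of_degree_le_one hdeg
  refine ⟨(f %ₘ g).coeff 0, (f %ₘ g).coeff 1, ?_⟩
  have : z = aeval (sqrtneg c) (f %ₘ g) := by
    conv_lhs => rw [← hf, ← modByMonic_add_div f g]
    simp [map_add, map_mul, hge]
  rw [this, hrep]
  simp [map_add, map_mul, aeval_C]
  ring

instance Kf.numberField (c : ℕ) : NumberField (Kf c) where
  to_charZero := inferInstance
  to_finiteDimensional := IntermediateField.adjoin.finiteDimensional (sqrtneg_integral c)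

lemma exists_int_of_rat_image (c : ℕ) (x : NumberField.RingOfIntegers (Kf c)) (r : ℚ)
    (h : ((algebraMap (NumberField.RingOfIntegers (Kf c)) (Kf c) x : Kf c) : ℂ) = (r : ℂ)) :
    ∃ t : ℤ, x = (t : NumberField.RingOfIntegers (Kf c)) ∧ (t : ℚ) = r := by
  have hKinj : Function.Injective ((↑) : Kf c → ℂ) := Subtype.coe_injective
  have h1 : algebraMap (NumberField.RingOfIntegers (Kf c)) (Kf c) x
      = algebraMap ℚ (Kf c) r := by
    apply hKinj
    rw [h]
    have : ((algebraMap ℚ (Kf c) r : Kf c) : ℂ) = algebraMap ℚ ℂ r := by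
      rw [show ((algebraMap ℚ (Kf c) r : Kf c) : ℂ) = algebraMap (Kf c) ℂ (algebraMap ℚ (Kf c) r) from rfl,
        ← IsScalarTower.algebraMap_apply ℚ (Kf c) ℂ]
    rw [this, eq_ratCast]
  have hint : IsIntegral ℤ (algebraMap ℚ (Kf c) r) := by
    rw [← h1]; exact NumberField.RingOfIntegers.isIntegral_coe x
  have hint2 : IsIntegral ℤ r :=
    (isIntegral_algebraMap_iff (algebraMap ℚ (Kf c)).injective).mp hint
  obtain ⟨t, ht⟩ := IsIntegrallyClosed.isIntegral_iff.mp hint2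
  refine ⟨t, ?_, by exact_mod_cast ht⟩
  apply NumberField.RingOfIntegers.coe_injective
  rw [h1, map_intCast, ← ht]
  simp
end helpers

lemma core_field {F : Type*} [Field F] (q : ℕ) [hqF : Fact q.Prime] [CharP F q]
    (p : ℕ) [hpF : Fact p.Prime] (x y : F)
    (h1 : x ^ p = y ^ p) (h2 : x ≠ y)
    (hxyq : (x + y) ^ q = x + y) (hmulq : (x * y) ^ q = x * y) :
    ((x - y) ^ (q - 1) = 1 ∧ p ∣ q - 1) ∨ ((x - y) ^ (q - 1) = -1 ∧ p ∣ q + 1) := by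
  have hq1 : 1 ≤ q := hqF.out.pos
  have hu0 : x - y ≠ 0 := sub_ne_zero.mpr h2
  have hfrob : x ^ q = x ∨ x ^ q = y := by
    have e2 : (x ^ 2) ^ q = (x + y) * x ^ q - x * y := by
      have e : x ^ 2 = (x + y) * x - x * y := by ring
      rw [e, sub_pow_char, mul_pow, hxyq, hmulq]
    have e1 : (x ^ q - x) * (x ^ q - y) = 0 := by
      have e3 : (x ^ q) ^ 2 = (x ^ 2) ^ q := by
        rw [← pow_mul, ← pow_mul, mul_comm]
      calc (x ^ q - x) * (x ^ q - y) = (x ^ q) ^ 2 - (x + y) * x ^ q + x * y := by ring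
        _ = 0 := by rw [e3, e2]; ring
    rcases mul_eq_zero.mp e1 with h | h
    · exact Or.inl (sub_eq_zero.mp h)
    · exact Or.inr (sub_eq_zero.mp h)
  rcases hfrob with hxq | hxq
  · -- split case
    left
    have hyq : y ^ q = y := by
      have h' : y = (x + y) - x := by ring
      rw [h', sub_pow_char, hxyq, hxq]
    have huq : (x - y) ^ q = x - y := by rw [sub_pow_char, hxq, hyq]
    have huq1 : (x - y) ^ (q - 1) = 1 := by
      have h' : (x - y) ^ (q - 1) * (x - y) = 1 * (x - y) := by
        rw [one_mul, ← pow_succ, Nat.sub_add_cancel hq1, huq]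
      exact mul_right_cancel₀ hu0 h'
    refine ⟨huq1, ?_⟩
    have hx0 : x ≠ 0 := by
      intro h
      apply h2
      have h' : y ^ p = 0 := by rw [← h1, h, zero_pow hpF.out.ne_zero]
      rw [h, pow_eq_zero_iff hpF.out.ne_zero |>.mp h']
    have hy0 : y ≠ 0 := by
      intro h
      apply h2
      have h' : x ^ p = 0 := by rw [h1, h, zero_pow hpF.out.ne_zero]
      rw [h, pow_eq_zero_iff hpF.out.ne_zero |>.mp h']
    have hxq1 : x ^ (q - 1) = 1 := by
      have h' : x ^ (q - 1) * x = 1 * x := by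
        rw [one_mul, ← pow_succ, Nat.sub_add_cancel hq1, hxq]
      exact mul_right_cancel₀ hx0 h'
    have hyq1 : y ^ (q - 1) = 1 := by
      have h' : y ^ (q - 1) * y = 1 * y := by
        rw [one_mul, ← pow_succ, Nat.sub_add_cancel hq1, hyq]
      exact mul_right_cancel₀ hy0 h'
    set g : F := x * y⁻¹ with hg
    have hgp : g ^ p = 1 := by
      rw [hg, mul_pow, h1, inv_pow, mul_inv_cancel₀ (pow_ne_zero _ hy0)]
    have hg1 : g ≠ 1 := by
      rw [hg, Ne, mul_inv_eq_one₀ hy0]; exact h2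
    have hgq : g ^ (q - 1) = 1 := by
      rw [hg, mul_pow, inv_pow, hxq1, hyq1]; norm_num
    have hord : orderOf g = p := orderOf_eq_prime hgp hg1
    exact hord ▸ orderOf_dvd_of_pow_eq_one hgq
  · -- inert case
    right
    have hyq : y ^ q = x := by
      have h' : y = (x + y) - x := by ring
      rw [h', sub_pow_char, hxyq, hxq]
      ring
    have huq : (x - y) ^ q = -(x - y) := by rw [sub_pow_char, hxq, hyq]; ring
    have huq1 : (x - y) ^ (q - 1) = -1 := by
      have h' : (x - y) ^ (q - 1) * (x - y) = -1 * (x - y) := by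
        rw [← pow_succ, Nat.sub_add_cancel hq1, huq]; ring
      exact mul_right_cancel₀ hu0 h'
    refine ⟨huq1, ?_⟩
    have hx0 : x ≠ 0 := by
      intro h
      apply h2
      have h' : y ^ q = 0 := by rw [hyq, h]
      rw [h, pow_eq_zero_iff hqF.out.ne_zero |>.mp h']
    have hy0 : y ≠ 0 := by
      intro h
      apply hx0
      rw [← hyq, h, zero_pow hqF.out.ne_zero]
    set g : F := x * y⁻¹ with hg
    have hgp : g ^ p = 1 := by
      rw [hg, mul_pow, h1, inv_pow, mul_inv_cancel₀ (pow_ne_zero _ hy0)]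
    have hg1 : g ≠ 1 := by
      rw [hg, Ne, mul_inv_eq_one₀ hy0]; exact h2
    have hgq : g ^ (q + 1) = 1 := by
      have hxq1 : x ^ (q + 1) = y * x := by rw [pow_succ, hxq]
      have hyq1 : y ^ (q + 1) = x * y := by rw [pow_succ, hyq]
      rw [hg, mul_pow, inv_pow, hxq1, hyq1]
      field_simp
    have hord : orderOf g = p := orderOf_eq_prime hgp hg1
    exact hord ▸ orderOf_dvd_of_pow_eq_one hgq

set_option maxHeartbeats 1000000 in
set_option synthInstance.maxHeartbeats 200000 in
theorem stmt12 (c : ℕ) (hcpos : 0 < c) (hcsqf : Squarefree c)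
    (q : ℕ) [hqF : Fact q.Prime] (hqodd : Odd q) (hqc : ¬ q ∣ c)
    (Q : Ideal (NumberField.RingOfIntegers (Kf c)))
    (hQprime : Q.IsPrime) (hQ0 : Q ≠ ⊥)
    (hQq : (q : NumberField.RingOfIntegers (Kf c)) ∈ Q)
    (p : ℕ) (hp : p.Prime)
    (δ δbar : NumberField.RingOfIntegers (Kf c))
    (hconj : ((algebraMap (NumberField.RingOfIntegers (Kf c)) (Kf c) δbar : Kf c) : ℂ)
      = (starRingEnd ℂ) ((algebraMap (NumberField.RingOfIntegers (Kf c)) (Kf c) δ : Kf c) : ℂ))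
    (hcong : δ ^ p - δbar ^ p ∈ Q) (hncong : δ - δbar ∉ Q) :
    (p : ℤ) ∣ (q : ℤ) - legendreSym q (-(c : ℤ)) := by
  haveI hpF : Fact p.Prime := ⟨hp⟩
  haveI : Q.IsMaximal := hQprime.isMaximal hQ0
  set F := NumberField.RingOfIntegers (Kf c) ⧸ Q with hF
  letI : Field F := Ideal.Quotient.field Q
  -- characteristic of F is q
  have hq0F : ((q : ℕ) : F) = 0 := by
    have := Ideal.Quotient.eq_zero_iff_mem.mpr hQq
    rw [← map_natCast (Ideal.Quotient.mk Q) q]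
    exact this
  have hcharq : ringChar F = q := CharP.ringChar_of_prime_eq_zero hqF.out hq0F
  haveI hchF : CharP F q := hcharq ▸ ringChar.charP F
  set ι : ZMod q →+* F := ZMod.castHom dvd_rfl F with hι
  have hιinj : Function.Injective ι := ι.injective
  set x : F := Ideal.Quotient.mk Q δ with hx
  set y : F := Ideal.Quotient.mk Q δbar with hy
  have h1 : x ^ p = y ^ p := by
    rw [hx, hy, ← map_pow, ← map_pow]
    exact Ideal.Quotient.eq.mpr hcong
  have h2 : x ≠ y := fun h => hncong (Ideal.Quotient.eq.mp h)
  -- rational representation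
  obtain ⟨r₀, r₁, hrep⟩ := Kf_rep c ((algebraMap (NumberField.RingOfIntegers (Kf c)) (Kf c) δ : Kf c) : ℂ)
    (SetLike.coe_mem _)
  have hconjα : (starRingEnd ℂ) (sqrtneg c) = - sqrtneg c := by
    unfold sqrtneg
    simp [Complex.conj_ofReal]
  have hbar : ((algebraMap (NumberField.RingOfIntegers (Kf c)) (Kf c) δbar : Kf c) : ℂ) = (r₀ : ℂ) - (r₁ : ℂ) * sqrtneg c := by
    rw [hconj, hrep]
    simp [map_add, map_mul, hconjα, Complex.conj_ofReal]
    ring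
  have hα2 := sqrtneg_sq c
  -- trace, norm, discriminant are integers
  obtain ⟨t, hts, -⟩ := exists_int_of_rat_image c (δ + δbar) (2 * r₀) (by
    push_cast [map_add]
    rw [hrep, hbar]; push_cast; ring)
  obtain ⟨n, hns, -⟩ := exists_int_of_rat_image c (δ * δbar) (r₀ ^ 2 + c * r₁ ^ 2) (by
    push_cast [map_mul]
    rw [hrep, hbar]; push_cast
    linear_combination (-(r₁:ℂ)^2) * hα2)
  obtain ⟨w, hws, hwv⟩ := exists_int_of_rat_image c ((δ - δbar) ^ 2) (-4 * c * r₁ ^ 2) (by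
    push_cast [map_pow, map_sub]
    rw [hrep, hbar]; push_cast
    linear_combination (4*(r₁:ℂ)^2) * hα2)
  -- arithmetic facts in F
  have hq1 : 1 ≤ q := hqF.out.pos
  have hq2div : 2 * (q / 2) = q - 1 := by
    obtain ⟨m, hm⟩ := hqodd; omega
  have hxyq : (x + y) ^ q = x + y := by
    have h' : x + y = ι ((t : ZMod q)) := by
      rw [hx, hy, ← map_add, hts, map_intCast, map_intCast]
    rw [h', ← map_pow, ZMod.pow_card]
  have hmulq : (x * y) ^ q = x * y := by
    have h' : x * y = ι ((n : ZMod q)) := by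
      rw [hx, hy, ← map_mul, hns, map_intCast, map_intCast]
    rw [h', ← map_pow, ZMod.pow_card]
  have hwF : (x - y) ^ 2 = ι ((w : ZMod q)) := by
    rw [hx, hy, ← map_sub, ← map_pow, hws, map_intCast, map_intCast]
  have hw0 : ((w : ℤ) : ZMod q) ≠ 0 := by
    intro h
    obtain ⟨k, hk⟩ := (ZMod.intCast_zmod_eq_zero_iff_dvd w q).mp h
    apply hncong
    apply hQprime.mem_of_pow_mem 2
    rw [hws, hk]
    have h' : (((q : ℤ) * k : ℤ) : NumberField.RingOfIntegers (Kf c))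
        = (q : NumberField.RingOfIntegers (Kf c)) * ((k : ℤ) : NumberField.RingOfIntegers (Kf c)) := by
      push_cast; ring
    rw [h']
    exact Ideal.mul_mem_right _ _ hQq
  -- the element 2 is invertible mod q
  have hq2ne : (2 : ZMod q) ≠ 0 := by
    intro h
    have h2' : ((2 : ℕ) : ZMod q) = 0 := by exact_mod_cast h
    have hdvd : q ∣ 2 := (ZMod.natCast_eq_zero_iff 2 q).mp h2'
    have hq2 : q = 2 := (Nat.prime_dvd_prime_iff_eq hqF.out Nat.prime_two).mp hdvd
    obtain ⟨m, hm⟩ := hqodd; omega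
  have hneg1 : (-1 : ZMod q) ≠ 1 := by
    intro h; apply hq2ne; linear_combination -h
  -- Euler criterion in F
  have heuler : (x - y) ^ (q - 1) = ι ((legendreSym q w : ZMod q)) := by
    rw [legendreSym.eq_pow, map_pow, ← hwF, ← pow_mul, hq2div]
  -- the mod-q relation between w and -c
  set a1 : ℤ := r₁.num with ha1
  set b1 : ℤ := (r₁.den : ℤ) with hb1
  have hb1ne : (b1 : ℚ) ≠ 0 := by
    rw [hb1]; exact_mod_cast r₁.den_nz
  have hb1q : (r₁ : ℚ) * (b1 : ℚ) = (a1 : ℚ) := by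
    have h' := Rat.num_div_den r₁
    rw [div_eq_iff (show ((r₁.den : ℚ)) ≠ 0 by exact_mod_cast r₁.den_nz)] at h'
    rw [hb1, ha1]
    push_cast
    linear_combination -h'
  have hidq : (w : ℚ) * (b1 : ℚ) ^ 2 = -4 * c * (a1 : ℚ) ^ 2 := by
    rw [hwv]
    linear_combination (-4 * (c : ℚ) * ((r₁ : ℚ) * (b1 : ℚ) + (a1 : ℚ))) * hb1q
  have hidz : w * b1 ^ 2 = -4 * c * a1 ^ 2 := by exact_mod_cast hidq
  have hmodq : ((w : ℤ) : ZMod q) * ((b1 : ℤ) : ZMod q) ^ 2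
      = -4 * (c : ZMod q) * ((a1 : ℤ) : ZMod q) ^ 2 := by
    have h' := congrArg (fun z : ℤ => (z : ZMod q)) hidz
    push_cast at h'
    exact_mod_cast h'
  have hc0 : (c : ZMod q) ≠ 0 := by
    rw [Ne, ZMod.natCast_eq_zero_iff]; exact hqc
  have h4c : (-4 : ZMod q) * (c : ZMod q) ≠ 0 := by
    apply mul_ne_zero _ hc0
    intro h; apply hq2ne
    have h' : (2 : ZMod q) * (2 : ZMod q) = 0 := by linear_combination -h
    rcases mul_eq_zero.mp h' with h' | h' <;> exact h'
  have hb10 : ((b1 : ℤ) : ZMod q) ≠ 0 := by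
    intro h
    have ha : ((a1 : ℤ) : ZMod q) = 0 := by
      have h' : ((a1 : ℤ) : ZMod q) ^ 2 * ((-4 : ZMod q) * (c : ZMod q)) = 0 := by
        rw [show ((a1 : ℤ) : ZMod q) ^ 2 * ((-4 : ZMod q) * (c : ZMod q))
          = -4 * (c : ZMod q) * ((a1 : ℤ) : ZMod q) ^ 2 by ring, ← hmodq, h]
        ring
      rcases mul_eq_zero.mp h' with h' | h'
      · exact pow_eq_zero_iff (by norm_num) |>.mp h'
      · exact absurd h' h4c
    have hqa : (q : ℤ) ∣ a1 := (ZMod.intCast_zmod_eq_zero_iff_dvd a1 q).mp ha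
    have hqb : (q : ℤ) ∣ b1 := (ZMod.intCast_zmod_eq_zero_iff_dvd b1 q).mp h
    have hqa' : q ∣ a1.natAbs := by
      have := Int.natAbs_dvd_natAbs.mpr hqa
      simpa using this
    have hqb' : q ∣ r₁.den := by
      rw [hb1] at hqb; exact_mod_cast hqb
    have hg := Nat.dvd_gcd hqa' hqb'
    rw [Nat.Coprime.gcd_eq_one r₁.reduced] at hg
    exact hqF.out.one_lt.ne' (Nat.dvd_one.mp hg)
  have ha10 : ((a1 : ℤ) : ZMod q) ≠ 0 := by
    intro h
    apply hw0
    have h' : ((w : ℤ) : ZMod q) * ((b1 : ℤ) : ZMod q) ^ 2 = 0 := by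
      rw [hmodq, h]; ring
    rcases mul_eq_zero.mp h' with h' | h'
    · exact h'
    · exact absurd (pow_eq_zero_iff (by norm_num) |>.mp h') hb10
  have hnegc0 : ((-(c : ℤ) : ℤ) : ZMod q) ≠ 0 := by
    push_cast
    exact neg_ne_zero.mpr hc0
  have h2a : (2 : ZMod q) * ((a1 : ℤ) : ZMod q) ≠ 0 := mul_ne_zero hq2ne ha10
  -- apply the core field lemma
  rcases core_field q p x y h1 h2 hxyq hmulq with ⟨hsign, hdvd⟩ | ⟨hsign, hdvd⟩
  · -- split case
    have hlw : legendreSym q w = 1 := by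
      rcases legendreSym.eq_one_or_neg_one (p := q) (a := w) hw0 with h | h
      · exact h
      · exfalso
        have h' : ι ((legendreSym q w : ZMod q)) = ι 1 := by
          rw [← heuler, hsign, map_one]
        have h'' := hιinj h'
        rw [h] at h''
        apply hneg1
        exact_mod_cast h''
    obtain ⟨e, he⟩ := (legendreSym.eq_one_iff q hw0).mp hlw
    have hlegc : legendreSym q (-(c : ℤ)) = 1 := by
      apply (legendreSym.eq_one_iff q hnegc0).mpr
      refine ⟨e * ((b1 : ℤ) : ZMod q) * ((2 : ZMod q) * ((a1 : ℤ) : ZMod q))⁻¹, ?_⟩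
      push_cast
      field_simp
      linear_combination (((b1 : ℤ) : ZMod q)) ^ 2 * he - hmodq
    rw [hlegc]
    have h' := Int.natCast_dvd_natCast.mpr hdvd
    rwa [Nat.cast_sub hq1, Nat.cast_one] at h'
  · -- inert case
    have hlw : legendreSym q w = -1 := by
      rcases legendreSym.eq_one_or_neg_one (p := q) (a := w) hw0 with h | h
      · exfalso
        have h' : ι ((legendreSym q w : ZMod q)) = ι (-1) := by
          rw [← heuler, hsign, map_neg, map_one]
        have h'' := hιinj h'
        rw [h] at h''
        apply hneg1
        exact_mod_cast h''.symm
      · exact h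
    have hlegc : legendreSym q (-(c : ℤ)) = -1 := by
      rcases legendreSym.eq_one_or_neg_one (p := q) (a := -(c : ℤ)) hnegc0 with h | h
      · exfalso
        obtain ⟨e, he⟩ := (legendreSym.eq_one_iff q hnegc0).mp h
        have hsq : IsSquare ((w : ℤ) : ZMod q) := by
          refine ⟨e * ((2 : ZMod q) * ((a1 : ℤ) : ZMod q)) / ((b1 : ℤ) : ZMod q), ?_⟩
          push_cast at he
          rw [div_mul_div_comm, eq_div_iff (mul_ne_zero hb10 hb10)]
          linear_combination hmodq + 4 * ((a1 : ℤ) : ZMod q) ^ 2 * he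
        have hcontra := (legendreSym.eq_one_iff q hw0).mpr hsq
        rw [hlw] at hcontra
        norm_num at hcontra
      · exact h
    rw [hlegc]
    have h' := Int.natCast_dvd_natCast.mpr hdvd
    push_cast at h'
    rw [sub_neg_eq_add]
    exact h'
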